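/- arXiv:2604.24957 — 4 statements merged into one kernel-verified Lean document; each statement's English description precedes it below -/
import Mathlib

section
/- For every natural number N ≥ 2, the Pass@N SFT scaling factor p ↦ N p (1 − p)^{N−1} / (1 − (1 − p)^N) is strictly decreasing on the open interval (0, 1). -/
/-- For `N ≥ 2`, the Pass@N SFT scaling factor `p ↦ N p (1-p)^(N-1) / (1-(1-p)^N)` is
strictly decreasing on `(0,1)`. -/
theorem passAtN_weight_strictAntiOn (N : ℕ) (hN : 2 ≤ N) :
    StrictAntiOn (fun p : ℝ => (N : ℝ) * p * (1 - p) ^ (N - 1) / (1 - (1 - p) ^ N))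
      (Set.Ioo 0 1) := by
  have hS : ∀ q : ℝ, 0 < q → 0 < ∑ k ∈ Finset.range N, q ^ k := by
    intro q hq
    apply Finset.sum_pos
    · intro k _
      positivity
    · exact ⟨0, Finset.mem_range.mpr (by omega)⟩
  have hrw : ∀ p : ℝ, 0 < p → p < 1 →
      (N : ℝ) * p * (1 - p) ^ (N - 1) / (1 - (1 - p) ^ N)
        = (N : ℝ) * (1 - p) ^ (N - 1) / ∑ k ∈ Finset.range N, (1 - p) ^ k := by
    intro p h0 h1
    have hden : 1 - (1 - p) ^ N = p * ∑ k ∈ Finset.range N, (1 - p) ^ k := by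
      have h := geom_sum_mul (1 - p) N
      linear_combination h
    have hS' : (0:ℝ) < ∑ k ∈ Finset.range N, (1 - p) ^ k := hS (1 - p) (by linarith)
    rw [hden]
    field_simp
  intro p1 hp1 p2 hp2 hlt
  obtain ⟨hp10, hp11⟩ := hp1
  obtain ⟨hp20, hp21⟩ := hp2
  have hq10 : (0:ℝ) < 1 - p1 := by linarith
  have hq20 : (0:ℝ) < 1 - p2 := by linarith
  have hq : (1 - p2 : ℝ) < 1 - p1 := by linarith
  have hS1 := hS (1 - p1) hq10
  have hS2 := hS (1 - p2) hq20
  simp only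
  rw [hrw p1 hp10 hp11, hrw p2 hp20 hp21, div_lt_div_iff₀ hS2 hS1]
  have key : (1 - p2) ^ (N - 1) * ∑ k ∈ Finset.range N, (1 - p1) ^ k
      < (1 - p1) ^ (N - 1) * ∑ k ∈ Finset.range N, (1 - p2) ^ k := by
    rw [Finset.mul_sum, Finset.mul_sum]
    apply Finset.sum_lt_sum
    · intro k hk
      have hk' : k ≤ N - 1 := by
        have := Finset.mem_range.mp hk; omega
      have hpow : ∀ x : ℝ, x ^ (N - 1) = x ^ (N - 1 - k) * x ^ k := by
        intro x; rw [← pow_add]; congr 1; omega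
      calc (1 - p2) ^ (N - 1) * (1 - p1) ^ k
          = (1 - p2) ^ k * ((1 - p2) ^ (N - 1 - k) * (1 - p1) ^ k) := by
            rw [hpow (1 - p2)]; ring
        _ ≤ (1 - p2) ^ k * ((1 - p1) ^ (N - 1 - k) * (1 - p1) ^ k) := by
            apply mul_le_mul_of_nonneg_left _ (by positivity)
            apply mul_le_mul_of_nonneg_right _ (by positivity)
            exact pow_le_pow_left₀ hq20.le hq.le _
        _ = (1 - p1) ^ (N - 1) * (1 - p2) ^ k := by
            rw [hpow (1 - p1)]; ring
    · refine ⟨0, Finset.mem_range.mpr (by omega), ?_⟩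
      simp only [pow_zero, mul_one]
      exact pow_lt_pow_left₀ hq hq20.le (by omega)
  have hNpos : (0:ℝ) < (N:ℝ) := by positivity
  calc (N:ℝ) * (1 - p2) ^ (N - 1) * ∑ k ∈ Finset.range N, (1 - p1) ^ k
      = (N:ℝ) * ((1 - p2) ^ (N - 1) * ∑ k ∈ Finset.range N, (1 - p1) ^ k) := by ring
    _ < (N:ℝ) * ((1 - p1) ^ (N - 1) * ∑ k ∈ Finset.range N, (1 - p2) ^ k) :=
        mul_lt_mul_of_pos_left key hNpos
    _ = (N:ℝ) * (1 - p1) ^ (N - 1) * ∑ k ∈ Finset.range N, (1 - p2) ^ k := by ring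
end

section
/- Let k and N be natural numbers with 1 ≤ k ≤ N. The Majority Vote SFT scaling factor w(p) = p · [N · C(N−1, k−1) · p^{k−1} (1 − p)^{N−k}] / [∑_{i=k}^{N} C(N, i) p^i (1 − p)^{N−i}] tends to k as p tends to 0 from the right. (Hence for hard samples the Majority Vote SFT gradient is boosted by the factor k, and its variance inflation factor approaches k².) -/
open Filter Finset

lemma mv_choose_id (k N : ℕ) (hk : 1 ≤ k) (hN : 1 ≤ N) :
    N * (N - 1).choose (k - 1) = k * N.choose k := by
  obtain ⟨m, rfl⟩ := Nat.exists_eq_add_of_le hk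
  obtain ⟨n, rfl⟩ := Nat.exists_eq_add_of_le hN
  simp only [Nat.add_comm 1, Nat.add_sub_cancel]
  have := Nat.add_one_mul_choose_eq n m
  rw [this, Nat.mul_comm]

/-- The Majority Vote SFT scaling factor
`w(p) = p ⬝ [N C(N-1,k-1) p^(k-1) (1-p)^(N-k)] / [∑_{i=k}^N C(N,i) p^i (1-p)^(N-i)]`
tends to `k` as `p → 0⁺`. -/
theorem majorityVote_weight_tendsto_k (k N : ℕ) (hk : 1 ≤ k) (hkN : k ≤ N) :
    Filter.Tendsto
      (fun p : ℝ =>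
        p * ((N : ℝ) * ((N - 1).choose (k - 1) : ℝ) * p ^ (k - 1) * (1 - p) ^ (N - k)) /
          ∑ i ∈ Finset.Icc k N, (N.choose i : ℝ) * p ^ i * (1 - p) ^ (N - i))
      (nhdsWithin 0 (Set.Ioi 0)) (nhds (k : ℝ)) := by
  set A : ℝ := (N : ℝ) * ((N - 1).choose (k - 1) : ℝ) with hA
  set D : ℝ → ℝ := fun p =>
    ∑ i ∈ Finset.Icc k N, (N.choose i : ℝ) * p ^ (i - k) * (1 - p) ^ (N - i) with hD
  have hAval : A = (k : ℝ) * (N.choose k : ℝ) := by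
    rw [hA]
    rw [← Nat.cast_mul, mv_choose_id k N hk (le_trans hk hkN), Nat.cast_mul]
  have hD0 : D 0 = (N.choose k : ℝ) := by
    rw [hD]
    simp only
    rw [Finset.sum_eq_single k]
    · simp
    · intro i hi hne
      have : 0 < i - k := by
        simp only [Finset.mem_Icc] at hi
        omega
      rw [zero_pow (by omega)]
      ring
    · intro h
      exact absurd (Finset.mem_Icc.mpr ⟨le_refl k, hkN⟩) h
  have hDcont : Filter.Tendsto D (nhds 0) (nhds ((N.choose k : ℝ))) := by
    rw [← hD0]
    apply Continuous.tendsto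
    apply continuous_finset_sum
    intro i _
    fun_prop
  have hchoose_ne : (N.choose k : ℝ) ≠ 0 := by
    exact_mod_cast (Nat.choose_pos hkN).ne'
  have hmain : Filter.Tendsto (fun p : ℝ => A * (1 - p) ^ (N - k) / D p)
      (nhdsWithin 0 (Set.Ioi 0)) (nhds (k : ℝ)) := by
    have h1 : Filter.Tendsto (fun p : ℝ => A * (1 - p) ^ (N - k)) (nhds 0) (nhds A) := by
      have : Continuous (fun p : ℝ => A * (1 - p) ^ (N - k)) := by fun_prop
      simpa using this.tendsto 0
    have h2 := (h1.div hDcont hchoose_ne)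
    have : A / (N.choose k : ℝ) = (k : ℝ) := by
      rw [hAval, mul_div_assoc, div_self hchoose_ne, mul_one]
    rw [this] at h2
    exact h2.mono_left nhdsWithin_le_nhds
  apply hmain.congr'
  filter_upwards [self_mem_nhdsWithin] with p (hp : 0 < p)
  have hpk : p ^ k ≠ 0 := pow_ne_zero _ hp.ne'
  have hnum : p * (A * p ^ (k - 1) * (1 - p) ^ (N - k)) =
      p ^ k * (A * (1 - p) ^ (N - k)) := by
    have : p * p ^ (k - 1) = p ^ k := by
      rw [← pow_succ']
      congr 1
      omega
    calc p * (A * p ^ (k - 1) * (1 - p) ^ (N - k))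
        = (p * p ^ (k - 1)) * (A * (1 - p) ^ (N - k)) := by ring
      _ = p ^ k * (A * (1 - p) ^ (N - k)) := by rw [this]
  have hden : ∑ i ∈ Finset.Icc k N, (N.choose i : ℝ) * p ^ i * (1 - p) ^ (N - i)
      = p ^ k * D p := by
    rw [hD, Finset.mul_sum]
    apply Finset.sum_congr rfl
    intro i hi
    have hki : k ≤ i := (Finset.mem_Icc.mp hi).1
    have : p ^ i = p ^ k * p ^ (i - k) := by
      rw [← pow_add]
      congr 1
      omega
    rw [this]; ring
  rw [hden, hnum, mul_div_mul_left _ _ hpk]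
end

section
/- Let α be a finite type, N ≥ 1 a natural number, and W a set of functions n : α → ℕ with ∑_a n(a) = N. Define F : (α → ℝ) → ℝ by F(π) = ∑_{n ∈ W} (N! / ∏_a n(a)!) · ∏_a π(a)^{n(a)}. Then for every k ∈ α and every π : α → ℝ, the partial derivative of F with respect to the coordinate π(k) equals N · ∑_{m} ((N−1)! / ∏_a m(a)!) · ∏_a π(a)^{m(a)}, where the sum is over all m : α → ℕ with ∑_a m(a) = N − 1 and m + e_k ∈ W, and e_k is the indicator function of k. (The sensitivity of an aggregation strategy's success probability to candidate k equals N times the multinomial probability of winning given that one of the N draws is forced to be candidate k.) -/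
/-!
Differentiating the monomial `∏ a, π a ^ n a` in `π k` gives `n k * ∏ a, π a ^ (n - e_k) a`, where
`e_k = Pi.single k 1`. For `n = m + e_k` and `N = ∑ a, n a` the multinomial coefficients satisfy
`N! / ∏ a, (n a)! * n k = N * ((N - 1)! / ∏ a, (m a)!)`. The terms with `n k = 0` vanish, so
`n ↦ n - e_k` reindexes the differentiated sum over `W` as the sum over the `m` with `m + e_k ∈ W`.
-/

section

open Finset Function Nat

variable {α : Type*} [DecidableEq α]

theorem sub_single_add_single {n : α → ℕ} {k : α} {x : ℕ} (h : x ≤ n k) :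
    n - Pi.single k x + Pi.single k x = n :=
  tsub_add_cancel_of_le fun a => by rcases eq_or_ne a k with rfl | hak <;> simp [*]

variable [Fintype α]

theorem prod_update_pow_eq {M : Type*} [CommMonoid M] (π : α → M) (n : α → ℕ) (k : α) (t : M) :
    ∏ a, update π k t a ^ n a = t ^ n k * ∏ a ∈ univ.erase k, π a ^ n a := by
  rw [← mul_prod_erase _ _ (mem_univ k), update_self]
  congr 1
  exact prod_congr rfl fun a ha => by rw [update_of_ne (ne_of_mem_erase ha)]

theorem prod_pow_sub_single_eq {M : Type*} [CommMonoid M] (π : α → M) (n : α → ℕ) (k : α) :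
    ∏ a, π a ^ (n - Pi.single k 1 : α → ℕ) a = π k ^ (n k - 1) * ∏ a ∈ univ.erase k, π a ^ n a := by
  rw [← mul_prod_erase _ _ (mem_univ k)]
  congr 1
  · simp
  · exact prod_congr rfl fun a ha => by simp [ne_of_mem_erase ha]

theorem hasDerivAt_prod_update_pow {𝕜 : Type*} [NontriviallyNormedField 𝕜] (π : α → 𝕜)
    (n : α → ℕ) (k : α) :
    HasDerivAt (fun t => ∏ a, update π k t a ^ n a)
      (n k * ∏ a, π a ^ (n - Pi.single k 1 : α → ℕ) a) (π k) := by
  simp only [prod_update_pow_eq, prod_pow_sub_single_eq, ← mul_assoc]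
  exact (hasDerivAt_pow (n k) (π k)).mul_const _

theorem sum_add_single {M : Type*} [AddCommMonoid M] (m : α → M) (k : α) (x : M) :
    ∑ a, (m + Pi.single k x : α → M) a = ∑ a, m a + x := by
  simp [sum_add_distrib]

theorem prod_factorial_add_single (m : α → ℕ) (k : α) :
    ∏ a, ((m + Pi.single k 1 : α → ℕ) a)! = (m k + 1) * ∏ a, (m a)! := by
  rw [← mul_prod_erase _ _ (mem_univ k), ← mul_prod_erase univ (fun a => (m a)!) (mem_univ k),
    ← mul_assoc]
  congr 1
  · simp [factorial_succ]
  · exact prod_congr rfl fun a ha => by simp [ne_of_mem_erase ha]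

theorem factorial_div_prod_factorial_add_single_mul {K : Type*} [Field K] [CharZero K] (M : ℕ)
    (m : α → ℕ) (k : α) :
    ((M + 1)! : K) / (∏ a, (((m + Pi.single k 1 : α → ℕ) a)! : K)) *
        ((m + Pi.single k 1 : α → ℕ) k : K)
      = (M + 1) * ((M ! : K) / ∏ a, ((m a)! : K)) := by
  have hm : ∏ a, ((m a)! : K) ≠ 0 :=
    prod_ne_zero_iff.2 fun a _ => Nat.cast_ne_zero.2 (factorial_ne_zero _)
  have h : ∏ a, (((m + Pi.single k 1 : α → ℕ) a)! : K) = (m k + 1) * ∏ a, ((m a)! : K) := by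
    exact_mod_cast prod_factorial_add_single m k
  rw [h, factorial_succ]
  simp only [Pi.add_apply, Pi.single_eq_same]
  push_cast
  field_simp

theorem sum_multinomial_mul_count_eq {K : Type*} [Field K] [CharZero K] (N : ℕ)
    (W : Finset (α → ℕ)) (hW : ∀ n ∈ W, ∑ a, n a = N) (k : α) (π : α → K) :
    ∑ n ∈ W, (N ! : K) / (∏ a, ((n a)! : K)) * (n k * ∏ a, π a ^ (n - Pi.single k 1 : α → ℕ) a)
      = N * ∑ m ∈ (Fintype.piFinset fun _ : α => range N).filter
          (fun m => ∑ a, m a = N - 1 ∧ m + Pi.single k 1 ∈ W),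
        ((N - 1)! : K) / (∏ a, ((m a)! : K)) * ∏ a, π a ^ m a := by
  rw [mul_sum, ← sum_filter_of_ne (p := fun n => 0 < n k) fun n _ hn => ?vanish]
  case vanish =>
    refine Nat.pos_of_ne_zero fun h => hn ?_
    simp [h]
  refine (sum_nbij' (· + Pi.single k 1) (· - Pi.single k 1) ?_ ?_ ?_ ?_ ?_).symm
  · intro m hm
    simp only [mem_filter] at hm ⊢
    exact ⟨hm.2.2, by simp⟩
  · intro n hn
    simp only [mem_filter] at hn
    have hsub := sub_single_add_single (x := 1) hn.2
    have hsum : ∑ a, (n - Pi.single k 1 : α → ℕ) a + 1 = N := by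
      rw [← sum_add_single, hsub, hW n hn.1]
    simp only [mem_filter, Fintype.mem_piFinset, mem_range, hsub]
    refine ⟨fun a => ?_, by omega, hn.1⟩
    have hle := single_le_sum (f := (n - Pi.single k 1 : α → ℕ)) (fun _ _ => Nat.zero_le _)
      (mem_univ a)
    omega
  · intro m _
    exact add_tsub_cancel_right m _
  · intro n hn
    exact sub_single_add_single (mem_filter.1 hn).2
  · intro m hm
    simp only [mem_filter] at hm
    obtain ⟨-, -, hmW⟩ := hm
    obtain rfl : ∑ a, m a + 1 = N := by rw [← sum_add_single, hW _ hmW]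
    rw [add_tsub_cancel_right, add_tsub_cancel_right, ← mul_assoc (_ / _),
      factorial_div_prod_factorial_add_single_mul]
    push_cast
    ring

end

theorem multinomial_gradient_identity_general {α : Type*} [Fintype α] [DecidableEq α]
    (N : ℕ) (W : Finset (α → ℕ)) (hW : ∀ n ∈ W, ∑ a, n a = N)
    (k : α) (π : α → ℝ) :
    HasDerivAt
      (fun t : ℝ => ∑ n ∈ W,
        ((N.factorial : ℝ) / ∏ a, ((n a).factorial : ℝ)) *
          ∏ a, Function.update π k t a ^ n a)
      ((N : ℝ) * ∑ m ∈ (Fintype.piFinset fun _ : α => Finset.range N).filter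
          (fun m => (∑ a, m a) = N - 1 ∧ (fun a => m a + if a = k then 1 else 0) ∈ W),
        (((N - 1).factorial : ℝ) / ∏ a, ((m a).factorial : ℝ)) * ∏ a, π a ^ m a)
      (π k) := by
  have hderiv := HasDerivAt.fun_sum fun n (_ : n ∈ W) =>
    (hasDerivAt_prod_update_pow π n k).const_mul
      ((N.factorial : ℝ) / ∏ a, ((n a).factorial : ℝ))
  simp only [← Pi.single_apply]
  exact hderiv.congr_deriv (sum_multinomial_mul_count_eq N W hW k π)

/-- Multinomial gradient identity: the partial derivative of the multinomial success
probability `F(π) = ∑_{n ∈ W} (N!/∏ n(a)!) ∏ π(a)^(n(a))` with respect to the coordinate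
`π(k)` equals `N` times the multinomial `(N-1)`-sample probability of the configurations
`m` with `m + e_k ∈ W`. -/
theorem multinomial_gradient_identity {α : Type*} [Fintype α] [DecidableEq α]
    (N : ℕ) (hN : 1 ≤ N) (W : Finset (α → ℕ)) (hW : ∀ n ∈ W, ∑ a, n a = N)
    (k : α) (π : α → ℝ) :
    HasDerivAt
      (fun t : ℝ => ∑ n ∈ W,
        ((N.factorial : ℝ) / ∏ a, ((n a).factorial : ℝ)) *
          ∏ a, Function.update π k t a ^ n a)
      ((N : ℝ) * ∑ m ∈ (Fintype.piFinset fun _ : α => Finset.range N).filter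
          (fun m => (∑ a, m a) = N - 1 ∧ (fun a => m a + if a = k then 1 else 0) ∈ W),
        (((N - 1).factorial : ℝ) / ∏ a, ((m a).factorial : ℝ)) * ∏ a, π a ^ m a)
      (π k) :=
  multinomial_gradient_identity_general N W hW k π
end

section
/- Let α be a finite type, y* ∈ α, j ∈ α with j ≠ y*, N ≥ 1, and let W = { n : α → ℕ | ∀ a ≠ y*, n(a) < n(y*) } be the plurality win set. Then for every nonnegative π : α → ℝ, ∑_{m : ∑m = N−1, m + e_j ∈ W} ((N−1)!/∏_a m(a)!) ∏_a π(a)^{m(a)} ≤ ∑_{m : ∑m = N−1, m + e_{y*} ∈ W} ((N−1)!/∏_a m(a)!) ∏_a π(a)^{m(a)}. (Majority Vote satisfies Adversarial Symmetry: the sensitivity of the plurality success probability to any rival answer is bounded in absolute value by its sensitivity to the ground truth, i.e. |∂p̃/∂π_j| ≤ ∂p̃/∂π_{y*}.) -/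
/-- Majority Vote satisfies Adversarial Symmetry: the multinomial `(N-1)`-sample mass of
configurations that win after a forced vote for a rival `j` is at most the mass of
configurations that win after a forced vote for the ground truth `ystar`, i.e.
`|∂p̃/∂π_j| ≤ ∂p̃/∂π_{ystar}`. -/
theorem majorityVote_adversarial_symmetry {α : Type*} [Fintype α] [DecidableEq α]
    (ystar j : α) (hj : j ≠ ystar) (N : ℕ) (hN : 1 ≤ N)
    (π : α → ℝ) (hπ : ∀ a, 0 ≤ π a) :
    ∑ m ∈ (Fintype.piFinset fun _ : α => Finset.range N).filter
        (fun m => (∑ a, m a) = N - 1 ∧ ∀ a, a ≠ ystar →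
          (m a + if a = j then 1 else 0) < (m ystar + if ystar = j then 1 else 0)),
      (((N - 1).factorial : ℝ) / ∏ a, ((m a).factorial : ℝ)) * ∏ a, π a ^ m a
    ≤ ∑ m ∈ (Fintype.piFinset fun _ : α => Finset.range N).filter
        (fun m => (∑ a, m a) = N - 1 ∧ ∀ a, a ≠ ystar →
          (m a + if a = ystar then 1 else 0) < (m ystar + if ystar = ystar then 1 else 0)),
      (((N - 1).factorial : ℝ) / ∏ a, ((m a).factorial : ℝ)) * ∏ a, π a ^ m a := by
  apply Finset.sum_le_sum_of_subset_of_nonneg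
  · intro m hm
    simp only [Finset.mem_filter] at hm ⊢
    obtain ⟨hmem, hsum, hwin⟩ := hm
    refine ⟨hmem, hsum, fun a ha => ?_⟩
    have h := hwin a ha
    rw [if_neg (Ne.symm hj)] at h
    split_ifs at h ⊢ <;> omega
  · intro m _ _
    apply mul_nonneg
    · apply div_nonneg (Nat.cast_nonneg _)
      exact Finset.prod_nonneg fun a _ => Nat.cast_nonneg _
    · exact Finset.prod_nonneg fun a _ => pow_nonneg (hπ a) _
end
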